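/- Let Y₀ be uniform on {−1,1} and Z₁ a random variable with values in {−1,0,1} on a finite probability space, with P(Y₀·Z₁ = −1) ≤ D/λ and P(Z₁ = 0) ≤ D. Then I(Y₀; Z₁) ≥ (1−D)·log 2 − h(D/λ), where h is the binary entropy function (extended monotonically so h(t) ≤ h(1/2) and h nondecreasing on [0,1/2]; assume D/λ ≤ 1/2). -/
import Mathlib

open Finset

/-- Shannon entropy (natural log) of a random variable `X` on a finite
probability space with weights `μ` (summing over the range of `X`). -/
noncomputable def ent {Ω α : Type*} [Fintype Ω] [DecidableEq α]
    (μ : Ω → ℝ) (X : Ω → α) : ℝ :=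
  ∑ a ∈ univ.image X, Real.negMulLog (∑ ω ∈ univ.filter (fun ω => X ω = a), μ ω)

/-- Mutual information `I(X;Y)` on a finite probability space. -/
noncomputable def mutualInfo {Ω α β : Type*} [Fintype Ω]
    [DecidableEq α] [DecidableEq β] (μ : Ω → ℝ) (X : Ω → α) (Y : Ω → β) : ℝ :=
  ent μ X + ent μ Y - ent μ (fun ω => (X ω, Y ω))

/-- Binary entropy function with natural logarithms. -/
noncomputable def binEnt (t : ℝ) : ℝ := Real.negMulLog t + Real.negMulLog (1 - t)

/-- Probability of an event on a finite probability space. -/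
def prOf {Ω : Type*} [Fintype Ω] (μ : Ω → ℝ) (E : Ω → Prop) [DecidablePred E] : ℝ :=
  ∑ ω ∈ univ.filter E, μ ω

/-- Two-point Gibbs inequality. -/
lemma gibbs2 {x y p : ℝ} (hx : 0 ≤ x) (hy : 0 ≤ y) (hp : 0 < p) (hp1 : p < 1) :
    Real.negMulLog x + Real.negMulLog y - Real.negMulLog (x + y) ≤
      x * (-Real.log p) + y * (-Real.log (1 - p)) := by
  have h1p : 0 < 1 - p := by linarith
  have hlp : Real.log p < 0 := Real.log_neg hp hp1
  have hl1p : Real.log (1 - p) ≤ 0 := Real.log_nonpos h1p.le (by linarith)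
  rcases hx.eq_or_lt with h | hx'
  · simp only [← h, Real.negMulLog_zero, zero_add]
    nlinarith [mul_nonneg hy (neg_nonneg.2 hl1p)]
  rcases hy.eq_or_lt with h | hy'
  · simp only [← h, Real.negMulLog_zero, add_zero]
    nlinarith [mul_nonneg hx'.le (neg_nonneg.2 hlp.le)]
  have hs : 0 < x + y := by linarith
  have e1 : Real.log ((x+y)*p/x) = Real.log (x+y) + Real.log p - Real.log x := by
    rw [Real.log_div (by positivity) (by positivity),
      Real.log_mul (by positivity) (by positivity)]
  have e2 : Real.log ((x+y)*(1-p)/y) = Real.log (x+y) + Real.log (1-p) - Real.log y := by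
    rw [Real.log_div (by positivity) (by positivity),
      Real.log_mul (by positivity) (by positivity)]
  have h1 : Real.log ((x+y)*p/x) ≤ (x+y)*p/x - 1 :=
    Real.log_le_sub_one_of_pos (by positivity)
  have h2 : Real.log ((x+y)*(1-p)/y) ≤ (x+y)*(1-p)/y - 1 :=
    Real.log_le_sub_one_of_pos (by positivity)
  rw [e1] at h1; rw [e2] at h2
  have A : x * (Real.log (x+y) + Real.log p - Real.log x) ≤ (x+y)*p - x := by
    calc x * (Real.log (x+y) + Real.log p - Real.log x)
        ≤ x * ((x+y)*p/x - 1) := mul_le_mul_of_nonneg_left h1 hx'.le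
      _ = (x+y)*p - x := by field_simp
  have B : y * (Real.log (x+y) + Real.log (1-p) - Real.log y) ≤ (x+y)*(1-p) - y := by
    calc y * (Real.log (x+y) + Real.log (1-p) - Real.log y)
        ≤ y * ((x+y)*(1-p)/y - 1) := mul_le_mul_of_nonneg_left h2 hy'.le
      _ = (x+y)*(1-p) - y := by field_simp
  simp only [Real.negMulLog]
  ring_nf at A B ⊢
  nlinarith [A, B]

lemma prOf_split {Ω : Type*} [Fintype Ω] (μ : Ω → ℝ) (p q : Ω → Prop)
    [DecidablePred p] [DecidablePred q] :
    prOf μ p = prOf μ (fun ω => p ω ∧ q ω) + prOf μ (fun ω => p ω ∧ ¬ q ω) := by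
  simp only [prOf]
  rw [← Finset.sum_filter_add_sum_filter_not (univ.filter p) q,
    Finset.filter_filter, Finset.filter_filter]

lemma prOf_congr {Ω : Type*} [Fintype Ω] (μ : Ω → ℝ) (p q : Ω → Prop)
    [DecidablePred p] [DecidablePred q] (h : ∀ ω, p ω ↔ q ω) :
    prOf μ p = prOf μ q := by
  simp only [prOf]
  rw [Finset.filter_congr (fun ω _ => h ω)]

lemma prOf_nonneg {Ω : Type*} [Fintype Ω] (μ : Ω → ℝ) (hμ0 : ∀ ω, 0 ≤ μ ω)
    (p : Ω → Prop) [DecidablePred p] : 0 ≤ prOf μ p :=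
  Finset.sum_nonneg fun ω _ => hμ0 ω

lemma ent_eq_sum {Ω α : Type*} [Fintype Ω] [DecidableEq α] (μ : Ω → ℝ) (X : Ω → α)
    (S : Finset α) (h : ∀ ω, X ω ∈ S) :
    ent μ X = ∑ a ∈ S, Real.negMulLog (prOf μ (fun ω => X ω = a)) := by
  simp only [ent, prOf]
  refine Finset.sum_subset ?_ ?_
  · intro a ha
    obtain ⟨ω, _, rfl⟩ := Finset.mem_image.1 ha
    exact h ω
  · intro a _ ha
    have he : univ.filter (fun ω => X ω = a) = ∅ := by
      ext ω
      simp only [mem_filter, mem_univ, true_and, Finset.notMem_empty, iff_false]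
      intro hx
      exact ha (Finset.mem_image.2 ⟨ω, Finset.mem_univ ω, hx⟩)
    rw [he, Finset.sum_empty, Real.negMulLog_zero]

theorem stmt_18 {Ω : Type*} [Fintype Ω] [DecidableEq Ω]
    (μ : Ω → ℝ) (hμ0 : ∀ ω, 0 ≤ μ ω) (hμ1 : ∑ ω, μ ω = 1)
    (Y0 Z1 : Ω → ℤ)
    (hY0range : ∀ ω, Y0 ω = 1 ∨ Y0 ω = -1)
    (hY0unif : prOf μ (fun ω => Y0 ω = 1) = 1 / 2)
    (hZ1range : ∀ ω, Z1 ω = -1 ∨ Z1 ω = 0 ∨ Z1 ω = 1)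
    (D lam : ℝ) (hlam : 0 < lam)
    (herr : prOf μ (fun ω => Y0 ω * Z1 ω = -1) ≤ D / lam)
    (herase : prOf μ (fun ω => Z1 ω = 0) ≤ D)
    (hhalf : D / lam ≤ 1 / 2) :
    (1 - D) * Real.log 2 - binEnt (D / lam) ≤ mutualInfo μ Y0 Z1 := by
  classical
  set a := prOf μ (fun ω => Y0 ω = 1 ∧ Z1 ω = 1) with ha_def
  set b := prOf μ (fun ω => Y0 ω = 1 ∧ Z1 ω = 0) with hb_def
  set c := prOf μ (fun ω => Y0 ω = 1 ∧ Z1 ω = -1) with hc_def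
  set d := prOf μ (fun ω => Y0 ω = -1 ∧ Z1 ω = 1) with hd_def
  set e := prOf μ (fun ω => Y0 ω = -1 ∧ Z1 ω = 0) with he_def
  set f := prOf μ (fun ω => Y0 ω = -1 ∧ Z1 ω = -1) with hf_def
  have ha0 : 0 ≤ a := prOf_nonneg μ hμ0 _
  have hb0 : 0 ≤ b := prOf_nonneg μ hμ0 _
  have hc0 : 0 ≤ c := prOf_nonneg μ hμ0 _
  have hd0 : 0 ≤ d := prOf_nonneg μ hμ0 _
  have he0 : 0 ≤ e := prOf_nonneg μ hμ0 _
  have hf0 : 0 ≤ f := prOf_nonneg μ hμ0 _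
  -- marginal of Y0 = y
  have hYmarg : ∀ y : ℤ, prOf μ (fun ω => Y0 ω = y) =
      prOf μ (fun ω => Y0 ω = y ∧ Z1 ω = -1) + prOf μ (fun ω => Y0 ω = y ∧ Z1 ω = 0)
        + prOf μ (fun ω => Y0 ω = y ∧ Z1 ω = 1) := by
    intro y
    rw [prOf_split μ (fun ω => Y0 ω = y) (fun ω => Z1 ω = -1),
      prOf_split μ (fun ω => Y0 ω = y ∧ ¬ Z1 ω = -1) (fun ω => Z1 ω = 0)]
    have h1 : prOf μ (fun ω => (Y0 ω = y ∧ ¬ Z1 ω = -1) ∧ Z1 ω = 0)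
        = prOf μ (fun ω => Y0 ω = y ∧ Z1 ω = 0) :=
      prOf_congr μ _ _ (fun ω => by rcases hZ1range ω with h|h|h <;> simp [h])
    have h2 : prOf μ (fun ω => (Y0 ω = y ∧ ¬ Z1 ω = -1) ∧ ¬ Z1 ω = 0)
        = prOf μ (fun ω => Y0 ω = y ∧ Z1 ω = 1) :=
      prOf_congr μ _ _ (fun ω => by rcases hZ1range ω with h|h|h <;> simp [h])
    rw [h1, h2]; ring
  -- marginal of Z1 = z
  have hZmarg : ∀ z : ℤ, prOf μ (fun ω => Z1 ω = z) =
      prOf μ (fun ω => Y0 ω = 1 ∧ Z1 ω = z) + prOf μ (fun ω => Y0 ω = -1 ∧ Z1 ω = z) := by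
    intro z
    rw [prOf_split μ (fun ω => Z1 ω = z) (fun ω => Y0 ω = 1)]
    have h1 : prOf μ (fun ω => Z1 ω = z ∧ Y0 ω = 1)
        = prOf μ (fun ω => Y0 ω = 1 ∧ Z1 ω = z) :=
      prOf_congr μ _ _ (fun ω => by tauto)
    have h2 : prOf μ (fun ω => Z1 ω = z ∧ ¬ Y0 ω = 1)
        = prOf μ (fun ω => Y0 ω = -1 ∧ Z1 ω = z) :=
      prOf_congr μ _ _ (fun ω => by rcases hY0range ω with h|h <;> simp [h] <;> tauto)
    rw [h1, h2]
  have hY1 : c + b + a = 1/2 := by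
    have := hYmarg 1
    rw [hY0unif] at this
    simp only [← ha_def, ← hb_def, ← hc_def] at this
    linarith
  have htot : prOf μ (fun ω => Y0 ω = 1) + prOf μ (fun ω => Y0 ω = -1) = 1 := by
    have hsplit := prOf_split μ (fun _ : Ω => True) (fun ω => Y0 ω = 1)
    have h0 : prOf μ (fun _ : Ω => True) = 1 := by
      simp only [prOf, Finset.filter_true_of_mem (fun _ _ => trivial)]
      exact hμ1
    have h1 : prOf μ (fun ω => True ∧ Y0 ω = 1) = prOf μ (fun ω => Y0 ω = 1) :=
      prOf_congr μ _ _ (fun ω => by simp)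
    have h2 : prOf μ (fun ω => True ∧ ¬ Y0 ω = 1) = prOf μ (fun ω => Y0 ω = -1) :=
      prOf_congr μ _ _ (fun ω => by rcases hY0range ω with h|h <;> simp [h])
    rw [h0, h1, h2] at hsplit
    linarith
  have hYm1 : f + e + d = 1/2 := by
    have h := hYmarg (-1)
    have h2 : prOf μ (fun ω => Y0 ω = -1) = 1/2 := by rw [hY0unif] at htot; linarith
    rw [h2] at h
    simp only [← hd_def, ← he_def, ← hf_def] at h
    linarith
  -- error probability
  have herr' : c + d ≤ D / lam := by
    have hcongr : prOf μ (fun ω => Y0 ω * Z1 ω = -1)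
        = prOf μ (fun ω => (Y0 ω = 1 ∧ Z1 ω = -1) ∨ (Y0 ω = -1 ∧ Z1 ω = 1)) :=
      prOf_congr μ _ _ (fun ω => by
        rcases hY0range ω with h1|h1 <;> rcases hZ1range ω with h2|h2|h2 <;>
          norm_num [h1, h2])
    rw [hcongr, prOf_split μ _ (fun ω => Y0 ω = 1)] at herr
    have h1 : prOf μ (fun ω => ((Y0 ω = 1 ∧ Z1 ω = -1) ∨ (Y0 ω = -1 ∧ Z1 ω = 1)) ∧ Y0 ω = 1)
        = prOf μ (fun ω => Y0 ω = 1 ∧ Z1 ω = -1) :=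
      prOf_congr μ _ _ (fun ω => by
        rcases hY0range ω with h|h <;> simp [h] <;> tauto)
    have h2 : prOf μ (fun ω => ((Y0 ω = 1 ∧ Z1 ω = -1) ∨ (Y0 ω = -1 ∧ Z1 ω = 1)) ∧ ¬ Y0 ω = 1)
        = prOf μ (fun ω => Y0 ω = -1 ∧ Z1 ω = 1) :=
      prOf_congr μ _ _ (fun ω => by
        rcases hY0range ω with h|h <;> simp [h] <;> tauto)
    rw [h1, h2] at herr
    simpa only [← hc_def, ← hd_def] using herr
  have herase' : b + e ≤ D := by
    have h := hZmarg 0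
    simp only [← hb_def, ← he_def] at h
    linarith [herase, h.symm.le, h.ge]
  -- entropies
  have hEntY : ent μ Y0 = Real.log 2 := by
    rw [ent_eq_sum μ Y0 {1, -1} (fun ω => by rcases hY0range ω with h|h <;> simp [h]),
      Finset.sum_pair (by norm_num)]
    have h2 : prOf μ (fun ω => Y0 ω = -1) = 1/2 := by rw [hY0unif] at htot; linarith
    rw [hY0unif, h2]
    have h12 : Real.negMulLog (1/2) = 1/2 * Real.log 2 := by
      rw [show (1:ℝ)/2 = 2⁻¹ by norm_num]
      simp only [Real.negMulLog, Real.log_inv]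
      ring
    rw [h12]; ring
  have hEntZ : ent μ Z1 = Real.negMulLog (c + f) + Real.negMulLog (b + e)
      + Real.negMulLog (a + d) := by
    rw [ent_eq_sum μ Z1 {-1, 0, 1} (fun ω => by rcases hZ1range ω with h|h|h <;> simp [h]),
      Finset.sum_insert (by norm_num), Finset.sum_insert (by norm_num),
      Finset.sum_singleton]
    rw [hZmarg (-1), hZmarg 0, hZmarg 1]
    simp only [← ha_def, ← hb_def, ← hc_def, ← hd_def, ← he_def, ← hf_def]
    ring_nf
  have hEntP : ent μ (fun ω => (Y0 ω, Z1 ω)) =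
      Real.negMulLog c + Real.negMulLog b + Real.negMulLog a
        + Real.negMulLog f + Real.negMulLog e + Real.negMulLog d := by
    rw [ent_eq_sum μ _ (({1, -1} : Finset ℤ) ×ˢ ({-1, 0, 1} : Finset ℤ))
      (fun ω => Finset.mem_product.2
        ⟨by rcases hY0range ω with h|h <;> simp [h],
         by rcases hZ1range ω with h|h|h <;> simp [h]⟩)]
    rw [Finset.sum_product]
    have key : ∀ y z : ℤ, prOf μ (fun ω => (Y0 ω, Z1 ω) = (y, z))
        = prOf μ (fun ω => Y0 ω = y ∧ Z1 ω = z) :=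
      fun y z => prOf_congr μ _ _ (fun ω => by simp [Prod.ext_iff])
    simp only [key]
    rw [Finset.sum_pair (by norm_num : (1:ℤ) ≠ -1)]
    rw [Finset.sum_insert (by norm_num), Finset.sum_insert (by norm_num),
      Finset.sum_singleton, Finset.sum_insert (by norm_num),
      Finset.sum_insert (by norm_num), Finset.sum_singleton]
    simp only [← ha_def, ← hb_def, ← hc_def, ← hd_def, ← he_def, ← hf_def]
    ring
  -- final inequality
  rw [mutualInfo, hEntY, hEntZ, hEntP]
  set q := D / lam with hq_def
  have hD0 : 0 ≤ D := le_trans (by linarith) herase'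
  have hq0 : 0 ≤ q := div_nonneg hD0 hlam.le
  have hlog2 : 0 < Real.log 2 := Real.log_pos (by norm_num)
  rcases hq0.eq_or_lt with hq | hq
  · -- q = 0 : all of b, c, d, e are zero
    have hD : D = 0 := by
      have h := hq.symm
      rw [hq_def, div_eq_iff hlam.ne'] at h
      linarith
    have hb : b = 0 := by linarith
    have he' : e = 0 := by linarith
    have hc : c = 0 := by linarith
    have hd : d = 0 := by linarith
    rw [hb, he', hc, hd, hD, ← hq]
    norm_num [binEnt, Real.negMulLog_zero, Real.negMulLog_one]
    linarith
  · have hq1 : q < 1 := by linarith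
    have h1q : 0 < 1 - q := by linarith
    have hlq : Real.log q < 0 := Real.log_neg hq hq1
    have hl1q : Real.log (1 - q) < 0 := Real.log_neg h1q (by linarith)
    have hqle : Real.log q ≤ Real.log (1 - q) := by
      apply Real.log_le_log hq; linarith
    have G1 : Real.negMulLog b + Real.negMulLog e - Real.negMulLog (b + e)
        ≤ b * Real.log 2 + e * Real.log 2 := by
      have h := gibbs2 hb0 he0 (by norm_num : (0:ℝ) < 1/2) (by norm_num)
      rw [show (1:ℝ) - 1/2 = 2⁻¹ by norm_num, show (1:ℝ)/2 = 2⁻¹ by norm_num,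
        Real.log_inv] at h
      simpa using h
    have G2 := gibbs2 hd0 ha0 hq hq1
    have G3 := gibbs2 hc0 hf0 hq hq1
    -- (b+e) log 2 ≤ D log 2
    have T1 : (b + e) * Real.log 2 ≤ D * Real.log 2 :=
      mul_le_mul_of_nonneg_right herase' hlog2.le
    -- assemble the (a,d),(c,f) part
    have t1 : (q - (c + d)) * Real.log q ≤ (q - (c + d)) * Real.log (1 - q) :=
      mul_le_mul_of_nonneg_left hqle (by linarith)
    have t2 : 0 ≤ (1 - (c + d) - (a + f)) * (-Real.log (1 - q)) := by
      apply mul_nonneg _ (by linarith)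
      linarith
    simp only [binEnt, Real.negMulLog] at G1 G2 G3 ⊢
    have hda : -(d + a) * Real.log (d + a) = -(a + d) * Real.log (a + d) := by
      rw [add_comm d a]
    rw [hda] at G2
    ring_nf at G1 G2 G3 t1 t2 T1 ⊢
    linarith [G1, G2, G3, t1, t2, T1]
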